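/- arXiv:2306.10929 — 5 statements merged into one kernel-verified Lean document; each statement's English description precedes it below -/
import Mathlib

section
/- Let X be a real-valued random variable with mean m and variance σ², and let c be a real number. Setting p₀ := P(X > c), one has E[(X - c)^+] ≤ (m - c)·p₀ + σ·√(p₀ - p₀²). -/
/-!
With `A = {c < X}` one has `(X - c)⁺ = (X - c) · 𝟙_A`, hence
`E[(X - c)⁺] = Cov(X, 𝟙_A) + (m - c) p₀`, and Cauchy–Schwarz bounds the covariance by
`σ · √Var(𝟙_A) = σ · √(p₀ - p₀²)`.
-/

open MeasureTheory ProbabilityTheory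

section CauchySchwarz

variable {Ω : Type*} [MeasurableSpace Ω] {μ : Measure Ω} {f g : Ω → ℝ}

theorem integral_mul_le_sqrt_integral_sq_mul_sqrt_integral_sq (hf : MemLp f 2 μ)
    (hg : MemLp g 2 μ) :
    ∫ ω, f ω * g ω ∂μ ≤ √(∫ ω, f ω ^ 2 ∂μ) * √(∫ ω, g ω ^ 2 ∂μ) := by
  have h2 : ENNReal.ofReal 2 = 2 := by norm_num
  calc ∫ ω, f ω * g ω ∂μ ≤ ∫ ω, |f ω| * |g ω| ∂μ := by
        simpa only [Real.norm_eq_abs, abs_mul] using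
          (le_abs_self _).trans (norm_integral_le_integral_norm fun ω ↦ f ω * g ω)
    _ ≤ (∫ ω, |f ω| ^ (2 : ℝ) ∂μ) ^ (1 / 2 : ℝ) * (∫ ω, |g ω| ^ (2 : ℝ) ∂μ) ^ (1 / 2 : ℝ) :=
        integral_mul_le_Lp_mul_Lq_of_nonneg .two_two (.of_forall fun _ ↦ abs_nonneg _)
          (.of_forall fun _ ↦ abs_nonneg _) (h2 ▸ hf.abs) (h2 ▸ hg.abs)
    _ = √(∫ ω, f ω ^ 2 ∂μ) * √(∫ ω, g ω ^ 2 ∂μ) := by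
        simp only [Real.rpow_two, sq_abs, Real.sqrt_eq_rpow, one_div]

end CauchySchwarz

namespace ProbabilityTheory

variable {Ω : Type*} [MeasurableSpace Ω] {μ : Measure Ω} {X Y : Ω → ℝ}

theorem covariance_le_sqrt_variance_mul_sqrt_variance [IsFiniteMeasure μ] (hX : MemLp X 2 μ)
    (hY : MemLp Y 2 μ) : cov[X, Y; μ] ≤ √Var[X; μ] * √Var[Y; μ] := by
  rw [covariance, variance_eq_integral hX.aemeasurable, variance_eq_integral hY.aemeasurable]
  exact integral_mul_le_sqrt_integral_sq_mul_sqrt_integral_sq (hX.sub (memLp_const _))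
    (hY.sub (memLp_const _))

theorem variance_indicator_one [IsProbabilityMeasure μ] {s : Set Ω} (hs : MeasurableSet s) :
    Var[s.indicator 1; μ] = μ.real s - μ.real s ^ 2 := by
  have hχ : MemLp (s.indicator (1 : Ω → ℝ)) 2 μ := (memLp_const 1).indicator hs
  rw [variance_eq_sub hχ]
  have hsq : s.indicator (1 : Ω → ℝ) ^ 2 = s.indicator 1 := by
    ext ω; by_cases h : ω ∈ s <;> simp [h]
  rw [hsq, integral_indicator_one hs]

theorem integral_max_sub_zero_eq_covariance_indicator [IsProbabilityMeasure μ]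
    (hXm : Measurable X) (hX : MemLp X 2 μ) (c : ℝ) :
    ∫ ω, max (X ω - c) 0 ∂μ =
      cov[X, {ω | c < X ω}.indicator 1; μ] + (μ[X] - c) * μ.real {ω | c < X ω} := by
  set A := {ω | c < X ω}
  have hA : MeasurableSet A := measurableSet_lt measurable_const hXm
  have hχ : MemLp (A.indicator (1 : Ω → ℝ)) 2 μ := (memLp_const 1).indicator hA
  have hmax : (fun ω ↦ max (X ω - c) 0) =
      fun ω ↦ (X * A.indicator (1 : Ω → ℝ)) ω - c * A.indicator 1 ω := by
    ext ω
    by_cases h : c < X ω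
    · simp [A, h, h.le]
    · simp [A, h, not_lt.1 h]
  rw [hmax, integral_sub (hX.integrable_mul hχ) ((hχ.integrable one_le_two).const_mul c),
    integral_const_mul, covariance_eq_sub hX hχ, integral_indicator_one hA]
  ring

theorem integral_max_sub_zero_le_of_measurable [IsProbabilityMeasure μ] (hXm : Measurable X)
    (hX : MemLp X 2 μ) (c : ℝ) :
    ∫ ω, max (X ω - c) 0 ∂μ ≤ (μ[X] - c) * μ.real {ω | c < X ω}
      + √Var[X; μ] * √(μ.real {ω | c < X ω} - μ.real {ω | c < X ω} ^ 2) := by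
  have hA : MeasurableSet {ω | c < X ω} := measurableSet_lt measurable_const hXm
  have hχ : MemLp ({ω | c < X ω}.indicator (1 : Ω → ℝ)) 2 μ := (memLp_const 1).indicator hA
  rw [integral_max_sub_zero_eq_covariance_indicator hXm hX, ← variance_indicator_one hA]
  linarith [covariance_le_sqrt_variance_mul_sqrt_variance hX hχ]

theorem integral_max_sub_zero_le [IsProbabilityMeasure μ] (hX : MemLp X 2 μ) (c : ℝ) :
    ∫ ω, max (X ω - c) 0 ∂μ ≤ (μ[X] - c) * μ.real {ω | c < X ω}
      + √Var[X; μ] * √(μ.real {ω | c < X ω} - μ.real {ω | c < X ω} ^ 2) := by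
  obtain ⟨Y, hYm, hXY⟩ := hX.aestronglyMeasurable
  have hint : ∫ ω, max (X ω - c) 0 ∂μ = ∫ ω, max (Y ω - c) 0 ∂μ :=
    integral_congr_ae <| hXY.mono fun ω h ↦ by simp only [h]
  have hA : μ.real {ω | c < X ω} = μ.real {ω | c < Y ω} :=
    measureReal_congr <| hXY.mono fun ω h ↦ congrArg (c < ·) h
  rw [hint, integral_congr_ae hXY, variance_congr hXY, hA]
  exact integral_max_sub_zero_le_of_measurable hYm.measurable (hX.ae_eq hXY) c

end ProbabilityTheory

theorem expectation_pos_part_upper_bound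
    {Ω : Type*} [MeasurableSpace Ω] (μ : Measure Ω) [IsProbabilityMeasure μ]
    (X : Ω → ℝ) (m c σ : ℝ) (hσ : 0 ≤ σ)
    (hX2 : MemLp X 2 μ)
    (hmean : ∫ ω, X ω ∂μ = m)
    (hvar : ∫ ω, (X ω - m) ^ 2 ∂μ = σ ^ 2) :
    ∫ ω, max (X ω - c) 0 ∂μ ≤
      (m - c) * (μ {ω | c < X ω}).toReal
        + σ * Real.sqrt ((μ {ω | c < X ω}).toReal - (μ {ω | c < X ω}).toReal ^ 2) := by
  have h := integral_max_sub_zero_le hX2 c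
  rwa [variance_eq_integral hX2.aemeasurable, hmean, hvar, Real.sqrt_sq hσ, measureReal_def] at h
end

section
/- Let X be a random variable with mean 0 and variance 1, and let c > 0. Then P(|X| > c) ≤ 2/(1 + c²). -/
/-! Markov's inequality for `X²` gives `c² P(|X| > c) ≤ E[X²] = 1`; adding the trivial bound
`P(|X| > c) ≤ 1` yields `(1 + c²) P(|X| > c) ≤ 2`. -/

open MeasureTheory

theorem sq_mul_measureReal_lt_abs_le_integral_sq {Ω : Type*} [MeasurableSpace Ω]
    {μ : Measure Ω} {X : Ω → ℝ} (hX : Integrable (fun ω ↦ X ω ^ 2) μ) {c : ℝ} (hc : 0 < c) :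
    c ^ 2 * μ.real {ω | c < |X ω|} ≤ ∫ ω, X ω ^ 2 ∂μ := by
  calc c ^ 2 * μ.real {ω | c < |X ω|}
      ≤ c ^ 2 * μ.real {ω | c ^ 2 ≤ X ω ^ 2} := by
        gcongr
        · exact (hX.measure_ge_lt_top (pow_pos hc 2)).ne
        · intro (hω : c < |X ω|)
          exact sq_le_sq.mpr ((abs_of_pos hc).trans_lt hω).le
    _ ≤ ∫ ω, X ω ^ 2 ∂μ :=
        mul_meas_ge_le_integral_of_nonneg (.of_forall fun ω ↦ sq_nonneg (X ω)) hX _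

theorem le_two_div_one_add_sq_of_le_one {p c : ℝ} (hp : p ≤ 1) (hcp : c ^ 2 * p ≤ 1) :
    p ≤ 2 / (1 + c ^ 2) := by
  rw [le_div_iff₀ (by positivity)]
  linarith

theorem prob_abs_gt_le_general
    {Ω : Type*} [MeasurableSpace Ω] (μ : Measure Ω) [IsProbabilityMeasure μ]
    (X : Ω → ℝ) (c : ℝ) (hc : 0 < c)
    (hvar : ∫ ω, (X ω) ^ 2 ∂μ = 1) :
    (μ {ω | c < |X ω|}).toReal ≤ 2 / (1 + c ^ 2) := by
  have hX : Integrable (fun ω ↦ X ω ^ 2) μ := .of_integral_ne_zero (by simp [hvar])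
  refine le_two_div_one_add_sq_of_le_one measureReal_le_one ?_
  exact hvar ▸ sq_mul_measureReal_lt_abs_le_integral_sq hX hc

theorem prob_abs_gt_le
    {Ω : Type*} [MeasurableSpace Ω] (μ : Measure Ω) [IsProbabilityMeasure μ]
    (X : Ω → ℝ) (c : ℝ) (hc : 0 < c)
    (hX2 : MemLp X 2 μ)
    (hmean : ∫ ω, X ω ∂μ = 0)
    (hvar : ∫ ω, (X ω) ^ 2 ∂μ = 1) :
    (μ {ω | c < |X ω|}).toReal ≤ 2 / (1 + c ^ 2) :=
  prob_abs_gt_le_general μ X c hc hvar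
end

section
/- Let X be a random variable with mean 0 and variance 1, c ∈ ℝ, and p := P(X ≤ c). Then E[min(X, c)] ≥ −√(p − p²) + c·(1 − p). -/
/-! With `A = {X ≤ c}` and `p = P(A)` we have `E[min(X, c)] = E[X; A] + c (1 - p)`. Since
`E[X] = 0`, `E[X; A] = E[X (1_A - p)]`, and Cauchy–Schwarz bounds this in absolute value by
`√(E[X²]) · √(E[(1_A - p)²]) = √(p - p²)`. -/

open MeasureTheory

namespace MeasureTheory

variable {Ω : Type*} [MeasurableSpace Ω] {μ : Measure Ω}

theorem abs_integral_mul_le_sqrt_mul_sqrt {f g : Ω → ℝ}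
    (hf : MemLp f 2 μ) (hg : MemLp g 2 μ) :
    |∫ ω, f ω * g ω ∂μ| ≤ √(∫ ω, f ω ^ 2 ∂μ) * √(∫ ω, g ω ^ 2 ∂μ) := by
  have hofReal : ENNReal.ofReal 2 = 2 := by norm_num
  have hholder := integral_mul_norm_le_Lp_mul_Lq (μ := μ) Real.HolderConjugate.two_two
    (hofReal ▸ hf) (hofReal ▸ hg)
  simp only [Real.norm_eq_abs, Real.rpow_two, sq_abs, ← Real.sqrt_eq_rpow] at hholder
  calc |∫ ω, f ω * g ω ∂μ| ≤ ∫ ω, |f ω| * |g ω| ∂μ := by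
        simp only [← abs_mul]; exact abs_integral_le_integral_abs
    _ ≤ _ := hholder

variable [IsProbabilityMeasure μ] {A : Set Ω}

theorem integral_indicator_one_sub_measureReal_sq (hA : NullMeasurableSet A μ) :
    ∫ ω, (A.indicator 1 ω - μ.real A) ^ 2 ∂μ = μ.real A - μ.real A ^ 2 := by
  set p := μ.real A
  have hI : Integrable (A.indicator 1) μ := (integrable_const (1 : ℝ)).indicator₀ hA
  have hsq (ω : Ω) : (A.indicator 1 ω - p) ^ 2 = (1 - 2 * p) * A.indicator 1 ω + p ^ 2 := by
    by_cases h : ω ∈ A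
    · simp only [h, Set.indicator_of_mem, Pi.one_apply]
      ring
    · simp [h]
  simp only [hsq]
  rw [integral_add (hI.const_mul _) (integrable_const _), integral_const_mul,
    integral_indicator₀ hA]
  simp only [Pi.one_apply, integral_const, measureReal_restrict_apply_univ, probReal_univ,
    smul_eq_mul]
  ring

theorem abs_setIntegral_le_of_integral_eq_zero {X : Ω → ℝ} (hX : MemLp X 2 μ)
    (hmean : ∫ ω, X ω ∂μ = 0) (hA : NullMeasurableSet A μ) :
    |∫ ω in A, X ω ∂μ| ≤ √(∫ ω, X ω ^ 2 ∂μ) * √(μ.real A - μ.real A ^ 2) := by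
  set p := μ.real A
  have hI : MemLp (A.indicator 1) 2 μ :=
    .of_bound ((integrable_const (1 : ℝ)).indicator₀ hA).aestronglyMeasurable 1
      (ae_of_all _ fun ω ↦ by
        simpa using norm_indicator_le_norm_self (s := A) (1 : Ω → ℝ) ω)
  have hcentered : ∫ ω in A, X ω ∂μ = ∫ ω, X ω * (A.indicator 1 ω - p) ∂μ := by
    have hpt (ω : Ω) : X ω * (A.indicator 1 ω - p) = A.indicator X ω - p * X ω := by
      by_cases h : ω ∈ A <;> simp [h] <;> ring
    have hXint := hX.integrable one_le_two
    simp only [hpt]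
    rw [integral_sub (hXint.indicator₀ hA) (hXint.const_mul p), integral_const_mul, hmean,
      integral_indicator₀ hA, mul_zero, sub_zero]
  rw [hcentered, ← integral_indicator_one_sub_measureReal_sq hA]
  exact abs_integral_mul_le_sqrt_mul_sqrt hX (hI.sub (memLp_const p))

theorem integral_min_eq_setIntegral_add {X : Ω → ℝ} (hX : Integrable X μ) (c : ℝ) :
    ∫ ω, min (X ω) c ∂μ =
      ∫ ω in {ω | X ω ≤ c}, X ω ∂μ + c * (1 - μ.real {ω | X ω ≤ c}) := by
  have hA : NullMeasurableSet {ω | X ω ≤ c} μ :=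
    nullMeasurableSet_le hX.aemeasurable aemeasurable_const
  have hmin : Integrable (fun ω ↦ min (X ω) c) μ := hX.inf (integrable_const c)
  rw [← integral_add_compl₀ hA hmin,
    setIntegral_congr_fun₀ hA fun ω (h : X ω ≤ c) ↦ min_eq_left h,
    setIntegral_congr_fun₀ hA.compl fun ω (h : ¬X ω ≤ c) ↦ min_eq_right (le_of_not_ge h),
    setIntegral_const, measureReal_compl₀ hA, probReal_univ, smul_eq_mul, mul_comm]

end MeasureTheory

theorem expectation_min_ge_L
    {Ω : Type*} [MeasurableSpace Ω] (μ : Measure Ω) [IsProbabilityMeasure μ]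
    (X : Ω → ℝ) (c : ℝ)
    (hX2 : MemLp X 2 μ)
    (hmean : ∫ ω, X ω ∂μ = 0)
    (hvar : ∫ ω, (X ω) ^ 2 ∂μ = 1) :
    -Real.sqrt ((μ {ω | X ω ≤ c}).toReal - (μ {ω | X ω ≤ c}).toReal ^ 2)
        + c * (1 - (μ {ω | X ω ≤ c}).toReal)
      ≤ ∫ ω, min (X ω) c ∂μ := by
  have hA : NullMeasurableSet {ω | X ω ≤ c} μ :=
    nullMeasurableSet_le hX2.aemeasurable aemeasurable_const
  have hbound := abs_setIntegral_le_of_integral_eq_zero hX2 hmean hA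
  rw [hvar, Real.sqrt_one, one_mul] at hbound
  rw [← measureReal_def, integral_min_eq_setIntegral_add (hX2.integrable one_le_two) c]
  linarith [neg_abs_le (∫ ω in {ω | X ω ≤ c}, X ω ∂μ)]
end

section
/- Let m > 0 and c > −m. Over all random variables X with E[X] = 0, E[X²] = 1, and X ≥ −m almost surely, the infimum of E[min(X, c)] equals c − (m+c)/(1+m²) if c ≤ (1−m²)/(2m), and equals c/2 − (1/2)√(1+c²) if c ≥ (1−m²)/(2m). Moreover, the infimum is attained by a two-point distributed random variable. -/
open MeasureTheory

namespace ScarfAux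

open Measure

noncomputable def twoPt (p a b : ℝ) : Measure ℝ :=
  ENNReal.ofReal p • Measure.dirac a + ENNReal.ofReal (1 - p) • Measure.dirac b

lemma integrable_dirac' (f : ℝ → ℝ) (a : ℝ) : Integrable f (Measure.dirac a) := by
  have h : (fun _ : ℝ => f a) =ᵐ[Measure.dirac a] f := by
    rw [Filter.eventuallyEq_iff_exists_mem]
    exact ⟨{a}, by simp [ae_dirac_eq], fun x hx => by simp at hx; simp [hx]⟩
  exact (integrable_const (f a)).congr h

lemma twoPt_isProb (p a b : ℝ) (h0 : 0 ≤ p) (h1 : p ≤ 1) :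
    IsProbabilityMeasure (twoPt p a b) := by
  constructor
  rw [twoPt, Measure.add_apply, Measure.smul_apply, Measure.smul_apply]
  simp only [measure_univ, smul_eq_mul, mul_one]
  rw [← ENNReal.ofReal_add h0 (by linarith)]
  norm_num

lemma twoPt_integral (p a b : ℝ) (h0 : 0 ≤ p) (h1 : p ≤ 1) (f : ℝ → ℝ) :
    ∫ x, f x ∂(twoPt p a b) = p * f a + (1 - p) * f b := by
  rw [twoPt, integral_add_measure
      ((integrable_dirac' f a).smul_measure ENNReal.ofReal_ne_top)
      ((integrable_dirac' f b).smul_measure ENNReal.ofReal_ne_top),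
    integral_smul_measure, integral_smul_measure, integral_dirac, integral_dirac,
    ENNReal.toReal_ofReal h0, ENNReal.toReal_ofReal (by linarith : (0:ℝ) ≤ 1 - p)]
  simp [smul_eq_mul]

lemma twoPt_ae (p a b m : ℝ) (hma : -m ≤ a) (hmb : -m ≤ b) :
    ∀ᵐ x ∂(twoPt p a b), -m ≤ x := by
  rw [ae_iff]
  have hset : {x : ℝ | ¬ -m ≤ x} = Set.Iio (-m) := by ext x; simp [not_le]
  rw [twoPt, Measure.add_apply, Measure.smul_apply, Measure.smul_apply, hset,
    Measure.dirac_apply' a measurableSet_Iio, Measure.dirac_apply' b measurableSet_Iio]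
  simp [Set.indicator, hma.not_gt, hmb.not_gt]

lemma twoPt_pair (p a b : ℝ) (h0 : 0 ≤ p) (h1 : p ≤ 1) :
    twoPt p a b {a, b} = 1 := by
  have hs : MeasurableSet ({a, b} : Set ℝ) :=
    MeasurableSet.insert (measurableSet_singleton b) a
  rw [twoPt, Measure.add_apply, Measure.smul_apply, Measure.smul_apply,
    Measure.dirac_apply' a hs, Measure.dirac_apply' b hs]
  simp only [Set.indicator, Set.mem_insert_iff, Set.mem_singleton_iff, true_or, or_true,
    if_pos, Pi.one_apply, smul_eq_mul, mul_one]
  rw [← ENNReal.ofReal_add h0 (by linarith)]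
  norm_num

lemma lower_bound (c d γ t : ℝ) (ν : Measure ℝ) [IsProbabilityMeasure ν]
    (h1 : (∫ x, x ∂ν) = 0) (h2 : (∫ x, x ^ 2 ∂ν) = 1)
    (hpt : ∀ᵐ x ∂ν, d - γ * (x - t) ^ 2 ≤ min x c) :
    d - γ * (1 + t ^ 2) ≤ ∫ x, min x c ∂ν := by
  have hi2 : Integrable (fun x : ℝ => x ^ 2) ν := by
    by_contra h
    rw [integral_undef h] at h2
    norm_num at h2
  have hi1 : Integrable (fun x : ℝ => x) ν := by
    refine (hi2.add (integrable_const 1)).mono' measurable_id.aestronglyMeasurable ?_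
    filter_upwards with x
    simp only [Real.norm_eq_abs, Pi.add_apply]
    nlinarith [sq_nonneg (|x| - 1), sq_abs x]
  have himin : Integrable (fun x : ℝ => min x c) ν := by
    refine (hi1.abs.add (integrable_const |c|)).mono'
      (measurable_id.min measurable_const).aestronglyMeasurable ?_
    filter_upwards with x
    simp only [Real.norm_eq_abs, Pi.add_apply]
    rcases le_total x c with h | h
    · rw [min_eq_left h]
      have h2 := abs_nonneg c
      have h3 := le_abs_self x
      have h4 := neg_abs_le x
      rw [abs_le]; constructor <;> nlinarith [abs_nonneg x]
    · rw [min_eq_right h]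
      linarith [abs_nonneg x, le_abs_self c, neg_abs_le c, abs_nonneg c]
  have hfe : (fun x : ℝ => d - γ * (x - t) ^ 2)
      = fun x => ((d - γ * t ^ 2) + (2 * γ * t) * x) + (-γ) * x ^ 2 := by
    funext x; ring
  have ha : Integrable (fun x : ℝ => (d - γ * t ^ 2) + (2 * γ * t) * x) ν := by
    exact (integrable_const _).add (hi1.const_mul _)
  have hb : Integrable (fun x : ℝ => (-γ) * x ^ 2) ν := hi2.const_mul _
  have hiq : Integrable (fun x : ℝ => d - γ * (x - t) ^ 2) ν := by
    rw [hfe]; exact ha.add hb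
  have h3 : (∫ x, (d - γ * (x - t) ^ 2) ∂ν) = d - γ * (1 + t ^ 2) := by
    rw [hfe, integral_add ha hb,
      integral_add (integrable_const _) (hi1.const_mul _),
      integral_const_mul, integral_const_mul, h1, h2, integral_const]
    simp
    ring
  calc d - γ * (1 + t ^ 2) = ∫ x, (d - γ * (x - t) ^ 2) ∂ν := h3.symm
    _ ≤ ∫ x, min x c ∂ν := integral_mono_ae hiq himin hpt

/-- Pointwise bound, case 1. -/
lemma pt1 (m c x : ℝ) (hm : 0 < m) (hc : -m < c) (hcc : c ≤ (1 - m ^ 2) / (2 * m))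
    (hx : -m ≤ x) :
    c - ((c + m) * m ^ 2 / (1 + m ^ 2) ^ 2) * (x - 1 / m) ^ 2 ≤ min x c := by
  have hγ : 0 ≤ (c + m) * m ^ 2 / (1 + m ^ 2) ^ 2 :=
    div_nonneg (mul_nonneg (by linarith) (sq_nonneg m)) (by positivity)
  have hA : 2 * c * m ≤ 1 - m ^ 2 := by
    rw [le_div_iff₀ (by linarith : (0:ℝ) < 2 * m)] at hcc
    linarith
  rw [le_min_iff]
  constructor
  · -- ≤ x
    have key : (c - x) * (1 + m ^ 2) ^ 2 ≤ (c + m) * (m * x - 1) ^ 2 := by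
      nlinarith [mul_nonneg (mul_nonneg (by linarith : (0:ℝ) ≤ c + m) (sq_nonneg m))
          (sq_nonneg (x + m)),
        mul_nonneg (mul_nonneg (by linarith : (0:ℝ) ≤ 1 - m ^ 2 - 2 * c * m)
          (by positivity : (0:ℝ) ≤ 1 + m ^ 2)) (by linarith : (0:ℝ) ≤ x + m)]
    have hexp : (c + m) * m ^ 2 / (1 + m ^ 2) ^ 2 * (x - 1 / m) ^ 2
        = (c + m) * (m * x - 1) ^ 2 / (1 + m ^ 2) ^ 2 := by
      field_simp
    have h2 : c - x ≤ (c + m) * (m * x - 1) ^ 2 / (1 + m ^ 2) ^ 2 := by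
      rw [le_div_iff₀ (by positivity)]; exact key
    rw [hexp]
    linarith
  · -- ≤ c
    nlinarith [mul_nonneg hγ (sq_nonneg (x - 1 / m))]

/-- Pointwise bound, case 2 (holds for all x). -/
lemma pt2 (c x : ℝ) :
    c - (1 / (4 * Real.sqrt (1 + c ^ 2))) * (x - (c + Real.sqrt (1 + c ^ 2))) ^ 2
      ≤ min x c := by
  set s := Real.sqrt (1 + c ^ 2) with hs
  have hs0 : 0 < s := Real.sqrt_pos.mpr (by positivity)
  rw [le_min_iff]
  constructor
  · have h : (c - x) * (4 * s) ≤ (x - (c + s)) ^ 2 := by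
      nlinarith [sq_nonneg (x - (c - s))]
    have h2 : c - x ≤ (x - (c + s)) ^ 2 / (4 * s) :=
      (le_div_iff₀ (by positivity)).mpr h
    have h3 : (1 / (4 * s)) * (x - (c + s)) ^ 2 = (x - (c + s)) ^ 2 / (4 * s) := by
      ring
    rw [h3]
    linarith
  · have : 0 ≤ (1 / (4 * s)) * (x - (c + s)) ^ 2 := by positivity
    linarith

end ScarfAux

open ScarfAux

set_option maxHeartbeats 1000000 in
theorem scarf_standardized (m c : ℝ) (hm : 0 < m) (hc : -m < c) :
    (c ≤ (1 - m ^ 2) / (2 * m) →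
      sInf {y : ℝ | ∃ ν : Measure ℝ, IsProbabilityMeasure ν ∧
          (∫ x, x ∂ν) = 0 ∧ (∫ x, x ^ 2 ∂ν) = 1 ∧ (∀ᵐ x ∂ν, -m ≤ x) ∧
          y = ∫ x, min x c ∂ν}
        = c - (m + c) / (1 + m ^ 2)) ∧
    ((1 - m ^ 2) / (2 * m) ≤ c →
      sInf {y : ℝ | ∃ ν : Measure ℝ, IsProbabilityMeasure ν ∧
          (∫ x, x ∂ν) = 0 ∧ (∫ x, x ^ 2 ∂ν) = 1 ∧ (∀ᵐ x ∂ν, -m ≤ x) ∧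
          y = ∫ x, min x c ∂ν}
        = c / 2 - (1 / 2) * Real.sqrt (1 + c ^ 2)) ∧
    (∃ ν : Measure ℝ, IsProbabilityMeasure ν ∧
        (∫ x, x ∂ν) = 0 ∧ (∫ x, x ^ 2 ∂ν) = 1 ∧ (∀ᵐ x ∂ν, -m ≤ x) ∧
        (∃ a b : ℝ, a ≠ b ∧ ν {a, b} = 1) ∧
        (∫ x, min x c ∂ν)
          = sInf {y : ℝ | ∃ ν' : Measure ℝ, IsProbabilityMeasure ν' ∧
              (∫ x, x ∂ν') = 0 ∧ (∫ x, x ^ 2 ∂ν') = 1 ∧ (∀ᵐ x ∂ν', -m ≤ x) ∧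
              y = ∫ x, min x c ∂ν'}) := by
  have hm2 : (0:ℝ) < 1 + m ^ 2 := by positivity
  -- Case 1 data
  have hp0 : (0:ℝ) ≤ 1 / (1 + m ^ 2) := by positivity
  have hp1 : (1:ℝ) / (1 + m ^ 2) ≤ 1 := by
    rw [div_le_one hm2]; nlinarith
  set ν₁ : Measure ℝ := twoPt (1 / (1 + m ^ 2)) (-m) (1 / m) with hν₁
  have hν₁prob : IsProbabilityMeasure ν₁ := twoPt_isProb _ _ _ hp0 hp1
  have hν₁mean : (∫ x, x ∂ν₁) = 0 := by
    rw [hν₁, twoPt_integral _ _ _ hp0 hp1]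
    field_simp
    ring
  have hν₁var : (∫ x, x ^ 2 ∂ν₁) = 1 := by
    rw [hν₁, twoPt_integral _ _ _ hp0 hp1]
    field_simp
    ring
  have hν₁ae : ∀ᵐ x ∂ν₁, -m ≤ x :=
    twoPt_ae _ _ _ _ le_rfl (by nlinarith [one_div_pos.mpr hm] : -m ≤ 1 / m)
  have hν₁min : c ≤ (1 - m ^ 2) / (2 * m) →
      (∫ x, min x c ∂ν₁) = c - (m + c) / (1 + m ^ 2) := by
    intro hcc
    have hA : 2 * c * m ≤ 1 - m ^ 2 := by
      rw [le_div_iff₀ (by linarith : (0:ℝ) < 2 * m)] at hcc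
      linarith
    have hc1m : c ≤ 1 / m := by
      rw [le_div_iff₀ hm]; nlinarith
    rw [hν₁, twoPt_integral _ _ _ hp0 hp1, min_eq_left hc.le, min_eq_right hc1m]
    field_simp
    ring
  -- Case 2 data
  set s := Real.sqrt (1 + c ^ 2) with hsdef
  have hs0 : 0 < s := Real.sqrt_pos.mpr (by positivity)
  have hs2 : s ^ 2 = 1 + c ^ 2 := Real.sq_sqrt (by positivity)
  have hcs : c < s := by nlinarith [sq_nonneg (s - c)]
  have hcs' : -s < c := by nlinarith [sq_nonneg (s + c)]
  have hq0 : (0:ℝ) ≤ (c + s) / (2 * s) := by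
    apply div_nonneg <;> linarith
  have hq1 : (c + s) / (2 * s) ≤ 1 := by
    rw [div_le_one (by linarith)]; linarith
  set ν₂ : Measure ℝ := twoPt ((c + s) / (2 * s)) (c - s) (c + s) with hν₂
  have hν₂prob : IsProbabilityMeasure ν₂ := twoPt_isProb _ _ _ hq0 hq1
  have hν₂mean : (∫ x, x ∂ν₂) = 0 := by
    rw [hν₂, twoPt_integral _ _ _ hq0 hq1]
    field_simp
    ring
  have hν₂var : (∫ x, x ^ 2 ∂ν₂) = 1 := by
    rw [hν₂, twoPt_integral _ _ _ hq0 hq1]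
    have hne : s ≠ 0 := by positivity
    field_simp
    nlinarith [hs2]
  have hν₂min : (∫ x, min x c ∂ν₂) = c / 2 - (1 / 2) * s := by
    rw [hν₂, twoPt_integral _ _ _ hq0 hq1,
      min_eq_left (by linarith : c - s ≤ c), min_eq_right (by linarith : c ≤ c + s)]
    have hne : s ≠ 0 := by positivity
    field_simp
    nlinarith [hs2]
  have hν₂ae : (1 - m ^ 2) / (2 * m) ≤ c → ∀ᵐ x ∂ν₂, -m ≤ x := by
    intro hcc
    have hB : 1 - m ^ 2 ≤ 2 * c * m := by
      rw [div_le_iff₀ (by linarith : (0:ℝ) < 2 * m)] at hcc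
      linarith
    have hsub : s ≤ c + m := by
      have h1 : (1:ℝ) + c ^ 2 ≤ (c + m) ^ 2 := by nlinarith
      calc s = Real.sqrt (1 + c ^ 2) := hsdef
        _ ≤ Real.sqrt ((c + m) ^ 2) := Real.sqrt_le_sqrt h1
        _ = c + m := Real.sqrt_sq (by linarith)
    exact twoPt_ae _ _ _ _ (by linarith) (by linarith)
  -- the two lower bound statements
  have hlb1 : c ≤ (1 - m ^ 2) / (2 * m) →
      ∀ y ∈ {y : ℝ | ∃ ν : Measure ℝ, IsProbabilityMeasure ν ∧
          (∫ x, x ∂ν) = 0 ∧ (∫ x, x ^ 2 ∂ν) = 1 ∧ (∀ᵐ x ∂ν, -m ≤ x) ∧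
          y = ∫ x, min x c ∂ν}, c - (m + c) / (1 + m ^ 2) ≤ y := by
    rintro hcc y ⟨ν, hprob, hmean, hvar, hae, rfl⟩
    have hpt : ∀ᵐ x ∂ν,
        c - ((c + m) * m ^ 2 / (1 + m ^ 2) ^ 2) * (x - 1 / m) ^ 2 ≤ min x c := by
      filter_upwards [hae] with x hx
      exact pt1 m c x hm hc hcc hx
    have := lower_bound c c ((c + m) * m ^ 2 / (1 + m ^ 2) ^ 2) (1 / m) ν hmean hvar hpt
    have heq : c - (c + m) * m ^ 2 / (1 + m ^ 2) ^ 2 * (1 + (1 / m) ^ 2)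
        = c - (m + c) / (1 + m ^ 2) := by
      field_simp
      ring
    rw [heq] at this
    exact this
  have hlb2 : ∀ y ∈ {y : ℝ | ∃ ν : Measure ℝ, IsProbabilityMeasure ν ∧
          (∫ x, x ∂ν) = 0 ∧ (∫ x, x ^ 2 ∂ν) = 1 ∧ (∀ᵐ x ∂ν, -m ≤ x) ∧
          y = ∫ x, min x c ∂ν}, c / 2 - (1 / 2) * s ≤ y := by
    rintro y ⟨ν, hprob, hmean, hvar, hae, rfl⟩
    have hpt : ∀ᵐ x ∂ν,
        c - (1 / (4 * s)) * (x - (c + s)) ^ 2 ≤ min x c :=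
      Filter.Eventually.of_forall fun x => by
        have := pt2 c x
        rw [← hsdef] at this
        exact this
    have := lower_bound c c (1 / (4 * s)) (c + s) ν hmean hvar hpt
    have heq : c - 1 / (4 * s) * (1 + (c + s) ^ 2) = c / 2 - (1 / 2) * s := by
      have hne : s ≠ 0 := by positivity
      field_simp
      nlinarith [hs2]
    rw [heq] at this
    exact this
  have H1 : c ≤ (1 - m ^ 2) / (2 * m) →
      sInf {y : ℝ | ∃ ν : Measure ℝ, IsProbabilityMeasure ν ∧
          (∫ x, x ∂ν) = 0 ∧ (∫ x, x ^ 2 ∂ν) = 1 ∧ (∀ᵐ x ∂ν, -m ≤ x) ∧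
          y = ∫ x, min x c ∂ν} = c - (m + c) / (1 + m ^ 2) := by
    intro hcc
    exact IsLeast.csInf_eq
      ⟨⟨ν₁, hν₁prob, hν₁mean, hν₁var, hν₁ae, (hν₁min hcc).symm⟩, hlb1 hcc⟩
  have H2 : (1 - m ^ 2) / (2 * m) ≤ c →
      sInf {y : ℝ | ∃ ν : Measure ℝ, IsProbabilityMeasure ν ∧
          (∫ x, x ∂ν) = 0 ∧ (∫ x, x ^ 2 ∂ν) = 1 ∧ (∀ᵐ x ∂ν, -m ≤ x) ∧
          y = ∫ x, min x c ∂ν} = c / 2 - (1 / 2) * s := by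
    intro hcc
    exact IsLeast.csInf_eq
      ⟨⟨ν₂, hν₂prob, hν₂mean, hν₂var, hν₂ae hcc, hν₂min.symm⟩, hlb2⟩
  refine ⟨H1, H2, ?_⟩
  by_cases hcase : c ≤ (1 - m ^ 2) / (2 * m)
  · refine ⟨ν₁, hν₁prob, hν₁mean, hν₁var, hν₁ae, ⟨-m, 1 / m, ?_, ?_⟩, ?_⟩
    · have h1m : (0:ℝ) < 1 / m := by positivity
      exact ne_of_lt (by linarith)
    · exact twoPt_pair _ _ _ hp0 hp1
    · rw [H1 hcase, hν₁min hcase]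
  · have hcase' : (1 - m ^ 2) / (2 * m) ≤ c := le_of_not_ge hcase
    refine ⟨ν₂, hν₂prob, hν₂mean, hν₂var, hν₂ae hcase', ⟨c - s, c + s, ?_, ?_⟩, ?_⟩
    · intro h
      have : (0:ℝ) < s := hs0
      nlinarith [h]
    · exact twoPt_pair _ _ _ hq0 hq1
    · rw [H2 hcase', hν₂min]
end

section
/- Let c, m, σ be strictly positive real numbers. The maximum of E[(X − c)^+] over all nonnegative random variables X with E[X] = m and Var(X) = σ² is attained and equals m − c·m²/(m²+σ²) if c ≤ (m²+σ²)/(2m), and equals (m−c)/2 + (1/2)·√((m−c)² + σ²) if c ≥ (m²+σ²)/(2m). -/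
/-!
Scarf's duality argument. If `q x = A x² + B x + C` dominates `(x - c)⁺` on `[0, ∞)`, then for
every admissible law `E (X - c)⁺ ≤ E q(X) = A (m² + σ²) + B m + C`, a number depending only on
the first two moments; the bound is attained by any admissible law carried by the contact set
`{q = (· - c)⁺}`. In each regime there is such a law on two points: `0` and `(m² + σ²) / m` when
`c ≤ (m² + σ²) / (2m)`, and `c ∓ √((m - c)² + σ²)` otherwise.
-/

open MeasureTheory

noncomputable def twoPointMeasure (p a b : ℝ) : Measure ℝ :=
  ENNReal.ofReal (1 - p) • Measure.dirac a + ENNReal.ofReal p • Measure.dirac b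

section TwoPoint

variable {p a b : ℝ}

lemma isProbabilityMeasure_twoPointMeasure (hp₀ : 0 ≤ p) (hp₁ : p ≤ 1) :
    IsProbabilityMeasure (twoPointMeasure p a b) :=
  ⟨by simp [twoPointMeasure, ← ENNReal.ofReal_add (sub_nonneg.2 hp₁) hp₀]⟩

lemma ae_twoPointMeasure {P : ℝ → Prop} (ha : P a) (hb : P b) :
    ∀ᵐ x ∂twoPointMeasure p a b, P x := by
  simp only [twoPointMeasure, ae_add_measure_iff]
  exact ⟨Measure.ae_smul_measure (by simpa [ae_dirac_eq] using ha) _,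
    Measure.ae_smul_measure (by simpa [ae_dirac_eq] using hb) _⟩

lemma integral_twoPointMeasure (hp₀ : 0 ≤ p) (hp₁ : p ≤ 1) (f : ℝ → ℝ) :
    ∫ x, f x ∂twoPointMeasure p a b = (1 - p) * f a + p * f b := by
  have hdirac (x : ℝ) : Integrable f (Measure.dirac x) := integrable_dirac enorm_lt_top
  rw [twoPointMeasure, integral_add_measure ((hdirac a).smul_measure ENNReal.ofReal_ne_top)
    ((hdirac b).smul_measure ENNReal.ofReal_ne_top), integral_smul_measure,
    integral_smul_measure, integral_dirac, integral_dirac,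
    ENNReal.toReal_ofReal (sub_nonneg.2 hp₁), ENNReal.toReal_ofReal hp₀, smul_eq_mul, smul_eq_mul]

end TwoPoint

lemma integrable_and_integral_quadratic {ν : Measure ℝ} [IsProbabilityMeasure ν] {m : ℝ}
    (hx : Integrable (fun x ↦ x) ν) (hv : Integrable (fun x ↦ (x - m) ^ 2) ν)
    (hmean : ∫ x, x ∂ν = m) (A B C : ℝ) :
    Integrable (fun x ↦ A * x ^ 2 + B * x + C) ν ∧
      ∫ x, A * x ^ 2 + B * x + C ∂ν = A * (m ^ 2 + ∫ x, (x - m) ^ 2 ∂ν) + B * m + C := by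
  have hq : (fun x ↦ A * x ^ 2 + B * x + C) =
      fun x ↦ A * (x - m) ^ 2 + ((2 * A * m + B) * x + (C - A * m ^ 2)) := by
    ext x; ring
  have hlin : Integrable (fun x ↦ (2 * A * m + B) * x + (C - A * m ^ 2)) ν :=
    (hx.const_mul _).add (integrable_const _)
  rw [hq]
  refine ⟨(hv.const_mul A).add hlin, ?_⟩
  rw [integral_add (hv.const_mul A) hlin, integral_add (hx.const_mul _) (integrable_const _),
    integral_const_mul, integral_const_mul, hmean]
  simp only [integral_const, probReal_univ, one_smul]
  ring

noncomputable def callPriceSet (c m σ : ℝ) : Set ℝ :=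
  {y : ℝ | ∃ ν : Measure ℝ, IsProbabilityMeasure ν ∧
      (∀ᵐ x ∂ν, 0 ≤ x) ∧ (∫ x, x ∂ν) = m ∧ (∫ x, (x - m) ^ 2 ∂ν) = σ ^ 2 ∧
      y = ∫ x, max (x - c) 0 ∂ν}

lemma isGreatest_callPriceSet_of_majorant {c m σ A B C : ℝ} (hm : m ≠ 0) (hσ : σ ≠ 0)
    (hmaj : ∀ x, 0 ≤ x → max (x - c) 0 ≤ A * x ^ 2 + B * x + C)
    (ν₀ : Measure ℝ) [IsProbabilityMeasure ν₀] (hν₀ : ∀ᵐ x ∂ν₀, 0 ≤ x)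
    (hmean₀ : ∫ x, x ∂ν₀ = m) (hvar₀ : ∫ x, (x - m) ^ 2 ∂ν₀ = σ ^ 2)
    (htouch : ∀ᵐ x ∂ν₀, max (x - c) 0 = A * x ^ 2 + B * x + C) :
    IsGreatest (callPriceSet c m σ) (A * (m ^ 2 + σ ^ 2) + B * m + C) := by
  have hquad (ν : Measure ℝ) [IsProbabilityMeasure ν] (hmean : ∫ x, x ∂ν = m)
      (hvar : ∫ x, (x - m) ^ 2 ∂ν = σ ^ 2) :
      Integrable (fun x ↦ A * x ^ 2 + B * x + C) ν ∧
        ∫ x, A * x ^ 2 + B * x + C ∂ν = A * (m ^ 2 + σ ^ 2) + B * m + C := by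
    -- `∫` of a non-integrable function is `0`, so `m ≠ 0` and `σ ≠ 0` force integrability
    rw [← hvar]
    exact integrable_and_integral_quadratic (.of_integral_ne_zero (hmean ▸ hm))
      (.of_integral_ne_zero (hvar ▸ pow_ne_zero 2 hσ)) hmean A B C
  refine ⟨⟨ν₀, inferInstance, hν₀, hmean₀, hvar₀, ?_⟩, ?_⟩
  · rw [integral_congr_ae htouch, (hquad ν₀ hmean₀ hvar₀).2]
  · rintro y ⟨ν, _, hν, hmean, hvar, rfl⟩
    obtain ⟨hint, hval⟩ := hquad ν hmean hvar
    calc ∫ x, max (x - c) 0 ∂ν ≤ ∫ x, A * x ^ 2 + B * x + C ∂ν :=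
          integral_mono_of_nonneg (ae_of_all _ fun _ ↦ le_max_right _ _) hint (hν.mono hmaj)
      _ = A * (m ^ 2 + σ ^ 2) + B * m + C := hval

lemma isGreatest_callPriceSet_of_le_half {c m σ : ℝ} (hc : 0 ≤ c) (hm : 0 < m) (hσ : σ ≠ 0)
    (hcm : c ≤ (m ^ 2 + σ ^ 2) / (2 * m)) :
    IsGreatest (callPriceSet c m σ) (m - c * m ^ 2 / (m ^ 2 + σ ^ 2)) := by
  set s := m ^ 2 + σ ^ 2
  have hs₀ : 0 < s := by positivity
  have h2cm : 2 * c * m ≤ s := by rw [le_div_iff₀ (by positivity)] at hcm; linarith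
  have hp₁ : m ^ 2 / s ≤ 1 := (div_le_one hs₀).2 (by nlinarith [sq_nonneg σ])
  have hB : 0 ≤ 1 - 2 * c * m / s := sub_nonneg.2 ((div_le_one hs₀).2 h2cm)
  have hcb : c ≤ s / m := by
    rw [le_div_iff₀ hm]; nlinarith
  have := isProbabilityMeasure_twoPointMeasure (a := 0) (b := s / m) (by positivity) hp₁
  have hint := integral_twoPointMeasure (a := 0) (b := s / m) (by positivity) hp₁
  convert isGreatest_callPriceSet_of_majorant (A := c * m ^ 2 / s ^ 2) (B := 1 - 2 * c * m / s)
    (C := 0) hm.ne' hσ ?_ (twoPointMeasure (m ^ 2 / s) 0 (s / m))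
    (ae_twoPointMeasure le_rfl (by positivity)) ?_ ?_ (ae_twoPointMeasure ?_ ?_) using 1
  · field_simp; ring
  · intro x hx
    -- the majorant is `x - c + c (m x - s)² / s²`
    refine max_le ?_ (by positivity)
    have hgap : c * m ^ 2 / s ^ 2 * x ^ 2 + (1 - 2 * c * m / s) * x + 0 - (x - c) =
        c * (m * x - s) ^ 2 / s ^ 2 := by field_simp; ring
    nlinarith [hgap, (by positivity : 0 ≤ c * (m * x - s) ^ 2 / s ^ 2)]
  · rw [hint]; field_simp; ring
  · rw [hint]; field_simp; ring
  · simp [hc]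
  · rw [max_eq_left (by linarith)]; field_simp; ring

lemma isGreatest_callPriceSet_of_half_le {c m σ : ℝ} (hm : 0 < m) (hσ : σ ≠ 0)
    (hcm : (m ^ 2 + σ ^ 2) / (2 * m) ≤ c) :
    IsGreatest (callPriceSet c m σ) ((m - c) / 2 + 1 / 2 * √((m - c) ^ 2 + σ ^ 2)) := by
  set t := √((m - c) ^ 2 + σ ^ 2)
  have ht₀ : 0 < t := Real.sqrt_pos.2 (by positivity)
  have ht2 : t ^ 2 = (m - c) ^ 2 + σ ^ 2 := Real.sq_sqrt (by positivity)
  have h2cm : m ^ 2 + σ ^ 2 ≤ 2 * m * c := by rw [div_le_iff₀ (by positivity)] at hcm; linarith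
  have hc₀ : 0 < c := by nlinarith [sq_nonneg σ]
  have htc : t ≤ c := by nlinarith
  have hσt : σ ^ 2 = t ^ 2 - (m - c) ^ 2 := by linarith
  have hp₀ : 0 ≤ (m - c + t) / (2 * t) := div_nonneg (by nlinarith) (by positivity)
  have hp₁ : (m - c + t) / (2 * t) ≤ 1 := (div_le_one (by positivity)).2 (by nlinarith)
  have := isProbabilityMeasure_twoPointMeasure (a := c - t) (b := c + t) hp₀ hp₁
  have hint := integral_twoPointMeasure (a := c - t) (b := c + t) hp₀ hp₁
  -- the majorant is `(x - (c - t))² / (4 t)`, tangent to `x - c` at `c + t`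
  have hq (x : ℝ) : 1 / (4 * t) * x ^ 2 + (-(c - t) / (2 * t)) * x + (c - t) ^ 2 / (4 * t) =
      (x - (c - t)) ^ 2 / (4 * t) := by field_simp; ring
  convert isGreatest_callPriceSet_of_majorant (A := 1 / (4 * t)) (B := -(c - t) / (2 * t))
    (C := (c - t) ^ 2 / (4 * t)) hm.ne' hσ ?_
    (twoPointMeasure ((m - c + t) / (2 * t)) (c - t) (c + t))
    (ae_twoPointMeasure (by linarith) (by linarith)) ?_ ?_ (ae_twoPointMeasure ?_ ?_) using 1
  · rw [hσt]; field_simp; ring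
  · intro x _
    rw [hq]
    refine max_le ?_ (by positivity)
    have hgap : (x - (c - t)) ^ 2 / (4 * t) - (x - c) = (x - (c + t)) ^ 2 / (4 * t) := by
      field_simp; ring
    nlinarith [hgap, (by positivity : 0 ≤ (x - (c + t)) ^ 2 / (4 * t))]
  · rw [hint]; field_simp; ring
  · rw [hint, hσt]; field_simp; ring
  · rw [hq, max_eq_right (by linarith)]; simp
  · rw [hq, max_eq_left (by linarith)]; field_simp; ring

theorem lo_bound (c m σ : ℝ) (hc : 0 < c) (hm : 0 < m) (hσ : 0 < σ) :
    (c ≤ (m ^ 2 + σ ^ 2) / (2 * m) →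
      sSup {y : ℝ | ∃ ν : Measure ℝ, IsProbabilityMeasure ν ∧
          (∀ᵐ x ∂ν, 0 ≤ x) ∧ (∫ x, x ∂ν) = m ∧ (∫ x, (x - m) ^ 2 ∂ν) = σ ^ 2 ∧
          y = ∫ x, max (x - c) 0 ∂ν}
        = m - c * m ^ 2 / (m ^ 2 + σ ^ 2)) ∧
    ((m ^ 2 + σ ^ 2) / (2 * m) ≤ c →
      sSup {y : ℝ | ∃ ν : Measure ℝ, IsProbabilityMeasure ν ∧
          (∀ᵐ x ∂ν, 0 ≤ x) ∧ (∫ x, x ∂ν) = m ∧ (∫ x, (x - m) ^ 2 ∂ν) = σ ^ 2 ∧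
          y = ∫ x, max (x - c) 0 ∂ν}
        = (m - c) / 2 + (1 / 2) * Real.sqrt ((m - c) ^ 2 + σ ^ 2)) ∧
    sSup {y : ℝ | ∃ ν : Measure ℝ, IsProbabilityMeasure ν ∧
          (∀ᵐ x ∂ν, 0 ≤ x) ∧ (∫ x, x ∂ν) = m ∧ (∫ x, (x - m) ^ 2 ∂ν) = σ ^ 2 ∧
          y = ∫ x, max (x - c) 0 ∂ν}
      ∈ {y : ℝ | ∃ ν : Measure ℝ, IsProbabilityMeasure ν ∧
          (∀ᵐ x ∂ν, 0 ≤ x) ∧ (∫ x, x ∂ν) = m ∧ (∫ x, (x - m) ^ 2 ∂ν) = σ ^ 2 ∧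
          y = ∫ x, max (x - c) 0 ∂ν} := by
  have low := isGreatest_callPriceSet_of_le_half hc.le hm hσ.ne' (c := c)
  have high := isGreatest_callPriceSet_of_half_le hm hσ.ne' (c := c)
  refine ⟨fun h ↦ (low h).csSup_eq, fun h ↦ (high h).csSup_eq, ?_⟩
  rcases le_total c ((m ^ 2 + σ ^ 2) / (2 * m)) with h | h
  · exact (low h).csSup_mem
  · exact (high h).csSup_mem
end
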